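/- In the two-class two-queue M/M/1 example, U is constant on the line segment L_1 = {(p_1, p_2) ∈ [0,1]² : γ_1 = γ_2}, taking the value (λ_1 β_1 + λ_2 β_2) D((λ_1 + λ_2)/2), and along L_1 the partial derivative ∂U/∂p_1 equals λ_1 D'((λ_1+λ_2)/2) ((2p_1 − 1) β_1 λ_1 + (2p_2 − 1) β_2 λ_2). In particular, since β_1 ≠ β_2, this partial derivative is nonzero at some point of L_1, so U does not attain its minimum at every point of L_1. -/

import Mathlib

/-!
On the balanced segment both queues carry the flow `s = (λ₁ + λ₂)/2`, so `D(γ₁) − D(γ₂)`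
vanishes and `U = (λ₁β₁ + λ₂β₂) D(s)` there. Moving `p₁` raises `γ₁` and lowers `γ₂` at rate
`λ₁`, which gives `∂U/∂p₁ = λ₁ D'(s) (2A − B)` with `A = p₁λ₁β₁ + p₂λ₂β₂`, `B = λ₁β₁ + λ₂β₂`.
Balance means `(2p₁ − 1)λ₁ + (2p₂ − 1)λ₂ = 0`, so `2A − B = (2p₁ − 1)λ₁(β₁ − β₂)`, which is
nonzero off `p₁ = 1/2`; at an interior such point `U` cannot be minimal.
-/

open Set Topology

noncomputable def socialCost (D : ℝ → ℝ) (lam1 lam2 beta1 beta2 p1 p2 : ℝ) : ℝ :=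
  (p1 * lam1 * beta1 + p2 * lam2 * beta2) *
      (D (lam1 * p1 + lam2 * p2) - D (lam1 * (1 - p1) + lam2 * (1 - p2))) +
    (lam1 * beta1 + lam2 * beta2) * D (lam1 * (1 - p1) + lam2 * (1 - p2))

section Balanced

variable {lam1 lam2 p1 p2 : ℝ}

theorem flows_eq_half_of_balanced
    (h : lam1 * p1 + lam2 * p2 = lam1 * (1 - p1) + lam2 * (1 - p2)) :
    lam1 * p1 + lam2 * p2 = (lam1 + lam2) / 2 ∧
      lam1 * (1 - p1) + lam2 * (1 - p2) = (lam1 + lam2) / 2 :=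
  ⟨by linarith, by linarith⟩

theorem socialCost_of_balanced (D : ℝ → ℝ) (beta1 beta2 : ℝ)
    (h : lam1 * p1 + lam2 * p2 = lam1 * (1 - p1) + lam2 * (1 - p2)) :
    socialCost D lam1 lam2 beta1 beta2 p1 p2 =
      (lam1 * beta1 + lam2 * beta2) * D ((lam1 + lam2) / 2) := by
  obtain ⟨h1, h2⟩ := flows_eq_half_of_balanced h
  rw [socialCost, h1, h2, sub_self, mul_zero, zero_add]

theorem hasDerivAt_socialCost_of_balanced {D : ℝ → ℝ} {d : ℝ} (beta1 beta2 : ℝ)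
    (hD : HasDerivAt D d ((lam1 + lam2) / 2))
    (h : lam1 * p1 + lam2 * p2 = lam1 * (1 - p1) + lam2 * (1 - p2)) :
    HasDerivAt (fun x => socialCost D lam1 lam2 beta1 beta2 x p2)
      (lam1 * d * ((2 * p1 - 1) * beta1 * lam1 + (2 * p2 - 1) * beta2 * lam2)) p1 := by
  obtain ⟨h1, h2⟩ := flows_eq_half_of_balanced h
  have hA : HasDerivAt (fun x => x * lam1 * beta1 + p2 * lam2 * beta2) (lam1 * beta1) p1 := by
    simpa [mul_assoc] using
      ((hasDerivAt_id p1).mul_const (lam1 * beta1)).add_const (p2 * lam2 * beta2)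
  have hγ₁ : HasDerivAt (fun x => lam1 * x + lam2 * p2) lam1 p1 := by
    simpa using ((hasDerivAt_id p1).const_mul lam1).add_const (lam2 * p2)
  have hγ₂ : HasDerivAt (fun x => lam1 * (1 - x) + lam2 * (1 - p2)) (-lam1) p1 := by
    simpa using (((hasDerivAt_id p1).const_sub 1).const_mul lam1).add_const (lam2 * (1 - p2))
  have hD₁ := (h1 ▸ hD).comp p1 hγ₁
  have hD₂ := (h2 ▸ hD).comp p1 hγ₂
  refine ((hA.mul (hD₁.sub hD₂)).add
    (hD₂.const_mul (lam1 * beta1 + lam2 * beta2))).congr_deriv ?_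
  simp only [Pi.sub_apply, Function.comp_apply, h1, h2, sub_self]
  ring

theorem exists_balanced_ne_half (hlam1 : 0 < lam1) (hlam2 : 0 < lam2) :
    ∃ p1 p2 : ℝ, p1 ∈ Ioo (0 : ℝ) 1 ∧ p2 ∈ Icc (0 : ℝ) 1 ∧
      lam1 * p1 + lam2 * p2 = lam1 * (1 - p1) + lam2 * (1 - p2) ∧ p1 ≠ 1 / 2 := by
  set t := 1 / (2 * (lam1 + lam2)) with ht_def
  have ht : 0 < t := by positivity
  have hlt : lam1 * t + lam2 * t = 1 / 2 := by rw [ht_def]; field_simp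
  refine ⟨1 / 2 + lam2 * t, 1 / 2 - lam1 * t, ⟨?_, ?_⟩, ⟨?_, ?_⟩, by ring, ?_⟩ <;>
    nlinarith [mul_pos hlam1 ht, mul_pos hlam2 ht]

end Balanced

theorem hasDerivAt_one_div_one_sub {g : ℝ} (hg : g ≠ 1) :
    HasDerivAt (fun g => 1 / (1 - g)) (1 / (1 - g) ^ 2) g := by
  have hg' : 1 - g ≠ 0 := sub_ne_zero.mpr hg.symm
  simp only [one_div]
  exact (((hasDerivAt_id g).const_sub 1).inv hg').congr_deriv (by simp)

theorem not_isMinOn_of_hasDerivAt_ne_zero {f : ℝ → ℝ} {f' x : ℝ} {s : Set ℝ}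
    (hs : s ∈ 𝓝 x) (hf : HasDerivAt f f' x) (hf' : f' ≠ 0) : ¬IsMinOn f s x :=
  fun hmin => hf' ((hmin.isLocalMin hs).hasDerivAt_eq_zero hf)

theorem social_cost_on_balanced_segment_general
    (lam1 lam2 beta1 beta2 : ℝ)
    (hlam1 : 0 < lam1) (hlam2 : 0 < lam2) (hstab : lam1 + lam2 < 1)
    (hbeta : beta1 > beta2)
    (D : ℝ → ℝ) (hD : ∀ g, D g = 1 / (1 - g))
    (U : ℝ → ℝ → ℝ)
    (hU : ∀ p1 p2 : ℝ,
      U p1 p2 = (p1 * lam1 * beta1 + p2 * lam2 * beta2) *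
              (D (lam1 * p1 + lam2 * p2) -
               D (lam1 * (1 - p1) + lam2 * (1 - p2))) +
            (lam1 * beta1 + lam2 * beta2) *
              D (lam1 * (1 - p1) + lam2 * (1 - p2))) :
    -- U is constant on L₁
    (∀ p1 p2 : ℝ, p1 ∈ Set.Icc (0:ℝ) 1 → p2 ∈ Set.Icc (0:ℝ) 1 →
      lam1 * p1 + lam2 * p2 = lam1 * (1 - p1) + lam2 * (1 - p2) →
      U p1 p2 = (lam1 * beta1 + lam2 * beta2) * D ((lam1 + lam2) / 2)) ∧
    -- formula for ∂U/∂p₁ on L₁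
    (∀ p1 p2 : ℝ,
      lam1 * p1 + lam2 * p2 = lam1 * (1 - p1) + lam2 * (1 - p2) →
      HasDerivAt (fun x => U x p2)
        (lam1 * deriv D ((lam1 + lam2) / 2) *
          ((2 * p1 - 1) * beta1 * lam1 + (2 * p2 - 1) * beta2 * lam2)) p1) ∧
    -- the derivative is nonzero somewhere on L₁ ∩ [0,1]²
    (∃ p1 p2 : ℝ, p1 ∈ Set.Icc (0:ℝ) 1 ∧ p2 ∈ Set.Icc (0:ℝ) 1 ∧
      lam1 * p1 + lam2 * p2 = lam1 * (1 - p1) + lam2 * (1 - p2) ∧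
      lam1 * deriv D ((lam1 + lam2) / 2) *
        ((2 * p1 - 1) * beta1 * lam1 + (2 * p2 - 1) * beta2 * lam2) ≠ 0) ∧
    -- hence U does not attain its global minimum over [0,1]² at every point of L₁
    ¬(∀ p1 p2 : ℝ, p1 ∈ Set.Icc (0:ℝ) 1 → p2 ∈ Set.Icc (0:ℝ) 1 →
      lam1 * p1 + lam2 * p2 = lam1 * (1 - p1) + lam2 * (1 - p2) →
      ∀ q1 q2 : ℝ, q1 ∈ Set.Icc (0:ℝ) 1 → q2 ∈ Set.Icc (0:ℝ) 1 →
        U p1 p2 ≤ U q1 q2) := by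
  obtain rfl : U = socialCost D lam1 lam2 beta1 beta2 := funext fun p1 => funext (hU p1)
  obtain rfl : D = fun g => 1 / (1 - g) := funext hD
  have hDs := hasDerivAt_one_div_one_sub (g := (lam1 + lam2) / 2) (by linarith)
  rw [hDs.deriv]
  have hderiv := fun p1 p2 h =>
    hasDerivAt_socialCost_of_balanced (p1 := p1) (p2 := p2) beta1 beta2 hDs h
  obtain ⟨p1, p2, hp1, hp2, hbal, hhalf⟩ := exists_balanced_ne_half hlam1 hlam2
  have hfactor : (2 * p1 - 1) * beta1 * lam1 + (2 * p2 - 1) * beta2 * lam2 =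
      (2 * p1 - 1) * lam1 * (beta1 - beta2) := by linear_combination beta2 * hbal
  have hne : lam1 * (1 / (1 - (lam1 + lam2) / 2) ^ 2) *
      ((2 * p1 - 1) * beta1 * lam1 + (2 * p2 - 1) * beta2 * lam2) ≠ 0 := by
    have hs : 1 - (lam1 + lam2) / 2 ≠ 0 := by linarith
    have hp1' : 2 * p1 - 1 ≠ 0 := fun h => hhalf (by linarith)
    rw [hfactor]
    exact mul_ne_zero (mul_ne_zero hlam1.ne' (one_div_ne_zero (pow_ne_zero 2 hs)))
      (mul_ne_zero (mul_ne_zero hp1' hlam1.ne') (sub_ne_zero.mpr hbeta.ne'))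
  refine ⟨fun _ _ _ _ h => socialCost_of_balanced _ beta1 beta2 h, hderiv,
    ⟨p1, p2, Ioo_subset_Icc_self hp1, hp2, hbal, hne⟩, fun hmin => ?_⟩
  refine not_isMinOn_of_hasDerivAt_ne_zero (Icc_mem_nhds hp1.1 hp1.2) (hderiv p1 p2 hbal) hne ?_
  exact isMinOn_iff.mpr fun q hq => hmin p1 p2 (Ioo_subset_Icc_self hp1) hp2 hbal q p2 hq hp2

/-- `U` is constant on the balanced-flow segment `L₁`, the partial
derivative `∂U/∂p₁` on `L₁` equals
`λ₁ D'((λ₁+λ₂)/2) ((2p₁−1)β₁λ₁ + (2p₂−1)β₂λ₂)`, and this derivative is nonzero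
at some point of `L₁`, so `U` does not attain its minimum at every point of `L₁`. -/
theorem social_cost_on_balanced_segment
    (lam1 lam2 beta1 beta2 : ℝ)
    (hlam1 : 0 < lam1) (hlam2 : 0 < lam2) (hstab : lam1 + lam2 < 1)
    (hbeta : beta1 > beta2) (hbeta2 : beta2 > 0)
    (D : ℝ → ℝ) (hD : ∀ g, D g = 1 / (1 - g))
    (U : ℝ → ℝ → ℝ)
    (hU : ∀ p1 p2 : ℝ,
      U p1 p2 = (p1 * lam1 * beta1 + p2 * lam2 * beta2) *
              (D (lam1 * p1 + lam2 * p2) -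
               D (lam1 * (1 - p1) + lam2 * (1 - p2))) +
            (lam1 * beta1 + lam2 * beta2) *
              D (lam1 * (1 - p1) + lam2 * (1 - p2))) :
    -- U is constant on L₁
    (∀ p1 p2 : ℝ, p1 ∈ Set.Icc (0:ℝ) 1 → p2 ∈ Set.Icc (0:ℝ) 1 →
      lam1 * p1 + lam2 * p2 = lam1 * (1 - p1) + lam2 * (1 - p2) →
      U p1 p2 = (lam1 * beta1 + lam2 * beta2) * D ((lam1 + lam2) / 2)) ∧
    -- formula for ∂U/∂p₁ on L₁
    (∀ p1 p2 : ℝ,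
      lam1 * p1 + lam2 * p2 = lam1 * (1 - p1) + lam2 * (1 - p2) →
      HasDerivAt (fun x => U x p2)
        (lam1 * deriv D ((lam1 + lam2) / 2) *
          ((2 * p1 - 1) * beta1 * lam1 + (2 * p2 - 1) * beta2 * lam2)) p1) ∧
    -- the derivative is nonzero somewhere on L₁ ∩ [0,1]²
    (∃ p1 p2 : ℝ, p1 ∈ Set.Icc (0:ℝ) 1 ∧ p2 ∈ Set.Icc (0:ℝ) 1 ∧
      lam1 * p1 + lam2 * p2 = lam1 * (1 - p1) + lam2 * (1 - p2) ∧
      lam1 * deriv D ((lam1 + lam2) / 2) *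
        ((2 * p1 - 1) * beta1 * lam1 + (2 * p2 - 1) * beta2 * lam2) ≠ 0) ∧
    -- hence U does not attain its global minimum over [0,1]² at every point of L₁
    ¬(∀ p1 p2 : ℝ, p1 ∈ Set.Icc (0:ℝ) 1 → p2 ∈ Set.Icc (0:ℝ) 1 →
      lam1 * p1 + lam2 * p2 = lam1 * (1 - p1) + lam2 * (1 - p2) →
      ∀ q1 q2 : ℝ, q1 ∈ Set.Icc (0:ℝ) 1 → q2 ∈ Set.Icc (0:ℝ) 1 →
        U p1 p2 ≤ U q1 q2) :=
  social_cost_on_balanced_segment_general lam1 lam2 beta1 beta2 hlam1 hlam2 hstab hbeta D hD U hU
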